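/- Young's law: if φ is convex, positively 1-homogeneous, coercive, and differentiable at a unit vector ν, and x ∈ ∂W_φ with ν in the normal cone to W_φ at x, then ∇φ(ν) = x; in particular if x_d = −λ then ∇φ(ν)·(−e_d) = λ. -/

import Mathlib

open Set Filter
open scoped InnerProductSpace Topology

noncomputable section

set_option linter.unusedVariables false

/-- Directional derivative along `v` from the right, from a gradient. -/
lemma dirDeriv {n : ℕ} (φ : EuclideanSpace ℝ (Fin n) → ℝ)
    (g ν v : EuclideanSpace ℝ (Fin n)) (hgrad : HasGradientAt φ g ν) :
    Tendsto (fun t : ℝ => (φ (ν + t • v) - φ ν) / t) (𝓝[>] (0:ℝ)) (𝓝 ⟪g, v⟫_ℝ) := by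
  have hline : HasDerivAt (fun t : ℝ => ν + t • v) v 0 := by
    simpa using ((hasDerivAt_id (0:ℝ)).smul_const v).const_add ν
  have hcomp : HasDerivAt (fun t : ℝ => φ (ν + t • v)) ⟪g, v⟫_ℝ 0 := by
    have hf := hgrad.hasFDerivAt
    have h0 : ν + (0:ℝ) • v = ν := by simp
    have hf' : HasFDerivAt φ ((InnerProductSpace.toDual ℝ _) g)
        ((fun t : ℝ => ν + t • v) 0) := by simpa using hf
    have := hf'.comp_hasDerivAt (0:ℝ) hline
    simp at this
    exact this
  have := hasDerivAt_iff_tendsto_slope.mp hcomp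
  have h2 : Tendsto (slope (fun t : ℝ => φ (ν + t • v)) 0) (𝓝[>] (0:ℝ)) (𝓝 ⟪g, v⟫_ℝ) :=
    this.mono_left (nhdsWithin_mono _ fun t ht => ne_of_gt ht)
  refine h2.congr' ?_
  filter_upwards [self_mem_nhdsWithin] with t ht
  simp [slope_def_field, div_eq_mul_inv, mul_comm]

/-- The Wulff set of `φ`, defined via all test directions. -/
def WulffAll {d : ℕ} (φ : EuclideanSpace ℝ (Fin d) → ℝ) : Set (EuclideanSpace ℝ (Fin d)) :=
  {x | ∀ ν : EuclideanSpace ℝ (Fin d), ⟪x, ν⟫_ℝ ≤ φ ν}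

/-- Young's law: if `φ` is convex, positively 1-homogeneous, coercive, and
differentiable at a unit vector `ν`, and `x ∈ ∂W_φ` with `ν` in the normal cone to `W_φ`
at `x`, then `∇φ(ν) = x`; in particular, if `x_d = −λ` then `∇φ(ν)·(−e_d) = λ`.
(The ambient space is `ℝ^{d+1}`.) -/
theorem youngs_law
    (d : ℕ) (φ : EuclideanSpace ℝ (Fin (d + 1)) → ℝ) (c : ℝ) (hc : 0 < c)
    (hconv : ConvexOn ℝ Set.univ φ)
    (hhom : ∀ t : ℝ, 0 < t → ∀ μ, φ (t • μ) = t * φ μ)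
    (hnonneg : ∀ μ, 0 ≤ φ μ)
    (hcoer : ∀ μ, c * ‖μ‖ ≤ φ μ)
    (ν x g : EuclideanSpace ℝ (Fin (d + 1)))
    (hν : ‖ν‖ = 1)
    (hgrad : HasGradientAt φ g ν)
    (hx : x ∈ frontier (WulffAll φ))
    (hnc : ∀ x' ∈ WulffAll φ, ⟪ν, x' - x⟫_ℝ ≤ 0) :
    g = x ∧ ∀ lam : ℝ, x (Fin.last d) = -lam →
      ⟪g, -(EuclideanSpace.single (Fin.last d) (1 : ℝ))⟫_ℝ = lam := by
  simp only [WulffAll] at hx hnc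
  set W : Set (EuclideanSpace ℝ (Fin (d+1))) :=
    {x | ∀ ν : EuclideanSpace ℝ (Fin (d+1)), ⟪x, ν⟫_ℝ ≤ φ ν} with hW
  -- W is closed, so x ∈ W
  have hWclosed : IsClosed W := by
    have : W = ⋂ μ : EuclideanSpace ℝ (Fin (d+1)), {y | ⟪y, μ⟫_ℝ ≤ φ μ} := by
      ext y; simp [hW, Set.mem_iInter]
    rw [this]
    exact isClosed_iInter fun μ =>
      isClosed_le (continuous_id.inner continuous_const) continuous_const
  have hxW : x ∈ W := by
    have := hx.1
    rwa [hWclosed.closure_eq] at this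
  -- subgradient inequality : g ∈ ∂φ(ν)
  have hsub : ∀ μ, φ ν + ⟪g, μ - ν⟫_ℝ ≤ φ μ := by
    intro μ
    have hdir := dirDeriv φ g ν (μ - ν) hgrad
    have hbound : ∀ᶠ t in nhdsWithin (0:ℝ) (Set.Ioi 0),
        (φ (ν + t • (μ - ν)) - φ ν) / t ≤ φ μ - φ ν := by
      filter_upwards [self_mem_nhdsWithin,
        Ioo_mem_nhdsGT (by norm_num : (0:ℝ) < 1)] with t ht ht1
      have ht0 : (0:ℝ) < t := ht
      have key : φ (ν + t • (μ - ν)) ≤ (1 - t) * φ ν + t * φ μ := by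
        have heq : ν + t • (μ - ν) = (1 - t) • ν + t • μ := by
          simp [smul_sub, sub_smul]; abel
        rw [heq]
        have := hconv.2 (Set.mem_univ ν) (Set.mem_univ μ)
          (by linarith [ht1.2] : (0:ℝ) ≤ 1 - t) (le_of_lt ht0) (by ring)
        simpa [smul_eq_mul] using this
      rw [div_le_iff₀ ht0]
      nlinarith [key]
    have := le_of_tendsto hdir hbound
    linarith
  -- Euler identity ⟪g, ν⟫ = φ ν
  have heuler : ⟪g, ν⟫_ℝ = φ ν := by
    have h2 := hsub ((2:ℝ) • ν)
    have h12 := hsub (((1:ℝ)/2) • ν)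
    rw [hhom 2 (by norm_num) ν] at h2
    rw [hhom (1/2) (by norm_num) ν] at h12
    have e2 : ⟪g, (2:ℝ) • ν - ν⟫_ℝ = ⟪g, ν⟫_ℝ := by
      rw [show (2:ℝ) • ν - ν = ν by module]
    have e12 : ⟪g, ((1:ℝ)/2) • ν - ν⟫_ℝ = -(1/2) * ⟪g, ν⟫_ℝ := by
      rw [show ((1:ℝ)/2) • ν - ν = (-(1/2) : ℝ) • ν by module, real_inner_smul_right]
    rw [e2] at h2; rw [e12] at h12
    linarith
  -- g ∈ W
  have hgW : g ∈ W := by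
    intro μ
    have := hsub μ
    rw [inner_sub_right] at this
    linarith [heuler]
  -- ⟪x, ν⟫ = φ ν
  have hxν : ⟪x, ν⟫_ℝ = φ ν := by
    have h1 := hnc g hgW
    rw [inner_sub_right] at h1
    have h2 : ⟪ν, g⟫_ℝ = φ ν := by rw [real_inner_comm]; exact heuler
    have h3 : ⟪x, ν⟫_ℝ ≤ φ ν := hxW ν
    have h4 : ⟪ν, x⟫_ℝ = ⟪x, ν⟫_ℝ := real_inner_comm _ _
    linarith
  -- x = g
  have hxg : x = g := by
    have hkey : ∀ v, ⟪x, v⟫_ℝ ≤ ⟪g, v⟫_ℝ := by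
      intro v
      have hdir := dirDeriv φ g ν v hgrad
      have hbound : ∀ᶠ t in nhdsWithin (0:ℝ) (Set.Ioi 0),
          ⟪x, v⟫_ℝ ≤ (φ (ν + t • v) - φ ν) / t := by
        filter_upwards [self_mem_nhdsWithin] with t ht
        have ht0 : (0:ℝ) < t := ht
        have := hxW (ν + t • v)
        rw [inner_add_right, real_inner_smul_right, hxν] at this
        rw [le_div_iff₀ ht0]
        nlinarith
      exact ge_of_tendsto hdir hbound
    have h0 : ⟪x - g, x - g⟫_ℝ ≤ 0 := by
      have := hkey (x - g)
      rw [inner_sub_left]; linarith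
    have hz : x - g = 0 := by
      have := real_inner_self_nonpos.mp h0
      exact this
    exact sub_eq_zero.mp hz
  refine ⟨hxg.symm, ?_⟩
  intro lam hlam
  rw [← hxg, inner_neg_right, EuclideanSpace.inner_single_right]
  simp [hlam]
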